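/- arXiv:2602.08954 — 2 statements merged into one kernel-verified Lean document; each statement's English description precedes it below -/
import Mathlib

section
/- Let C be a monoidal category and A an algebra (monoid object) in C. The free module functor - ⊗ A : C → Mod_A(C) is separable if and only if the unit morphism u_A : 1 → A is a split monomorphism in C. -/
/-!
STATEMENT 2: Let `C` be a monoidal category and `A` an algebra (monoid object) in
`C`. The free module functor `C ⥤ Mod_A(C)` is separable if and only if the unit
morphism `u_A : 𝟙_C ⟶ A` is a split monomorphism in `C`.
(We use Mathlib's left module objects, so the free module functor is `A ⊗ -`;
by [BZ26, Proposition 3.20] this is interchangeable with `- ⊗ A`.)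
-/

open CategoryTheory CategoryTheory.Limits MonoidalCategory

universe v u v₂ u₂

/-- The data exhibiting a functor `F` as separable: a natural retraction of the map
`Hom(X, Y) → Hom(F X, F Y)`. -/
structure CategoryTheory.Functor.SeparabilityStructure {C : Type u} [Category.{v} C]
    {D : Type u₂} [Category.{v₂} D] (F : C ⥤ D) where
  retr : ∀ {X Y : C}, (F.obj X ⟶ F.obj Y) → (X ⟶ Y)
  naturality : ∀ {X X' Y Y' : C} (u : X' ⟶ X) (v : Y ⟶ Y') (h : F.obj X ⟶ F.obj Y),
    retr (F.map u ≫ h ≫ F.map v) = u ≫ retr h ≫ v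
  retr_map : ∀ {X Y : C} (f : X ⟶ Y), retr (F.map f) = f

/-- A functor is separable if `Hom(-,-) → Hom(F-,F-)` admits a natural retraction. -/
def CategoryTheory.Functor.Separable {C : Type u} [Category.{v} C]
    {D : Type u₂} [Category.{v₂} D] (F : C ⥤ D) : Prop :=
  Nonempty F.SeparabilityStructure

variable {C : Type u} [Category.{v} C] [MonoidalCategory C]

/-- The free module functor by an algebra `A`, sending `M` to the free `A`-module `A ⊗ M`. -/
def freeMod (A : Mon C) : C ⥤ Mod C A.X where
  obj M :=
    letI : ModObj A.X (A.X ⊗ M) :=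
      { smul := (α_ A.X A.X M).inv ≫ (A.mon.mul ▷ M)
        one_smul := by
          dsimp
          rw [associator_inv_naturality_left_assoc, ← comp_whiskerRight, MonObj.one_mul,
            leftUnitor_tensor_hom]
        mul_smul := by
          change (A.mon.mul ▷ (A.X ⊗ M)) ≫ ((α_ A.X A.X M).inv ≫ (A.mon.mul ▷ M)) =
            (α_ A.X A.X (A.X ⊗ M)).hom ≫ A.X ◁ ((α_ A.X A.X M).inv ≫ (A.mon.mul ▷ M)) ≫
              ((α_ A.X A.X M).inv ≫ (A.mon.mul ▷ M))
          slice_lhs 1 2 => rw [associator_inv_naturality_left]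
          slice_lhs 2 3 => rw [← comp_whiskerRight, MonObj.mul_assoc]
          simp only [MonoidalCategory.whiskerLeft_comp, comp_whiskerRight, Category.assoc]
          coherence }
    ⟨A.X ⊗ M⟩
  map {X Y} f := Mod.Hom.mk' (A.X ◁ f) (by
    change ((α_ A.X A.X X).inv ≫ (A.mon.mul ▷ X)) ≫ A.X ◁ f =
      A.X ◁ A.X ◁ f ≫ ((α_ A.X A.X Y).inv ≫ (A.mon.mul ▷ Y))
    rw [Category.assoc, ← whisker_exchange, associator_inv_naturality_right_assoc])
  map_id M := by ext; exact MonoidalCategory.whiskerLeft_id A.X M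
  map_comp f g := by ext; exact MonoidalCategory.whiskerLeft_comp A.X f g

/-! The free module functor `F` is left adjoint to the forgetful functor `G`, with unit
`η_X = (λ_ X).inv ≫ u_A ▷ X`. For any functors `F`, `G` and split mono `η : 𝟭 ⟶ F ⋙ G` with
retraction `ν`, the map `h ↦ η_X ≫ G h ≫ ν_Y` is a natural retraction of `F` on hom-sets
(Rafael's criterion); here a retraction `r` of `u_A` gives `ν_X = r ▷ X ≫ (λ_ X).hom`.
Conversely, a separable functor reflects split monos, and `F η_X` is split by the counit, so
each `η_X` is split; at `X = 𝟙_ C`, `η_X` is `u_A` followed by an isomorphism. -/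

namespace CategoryTheory

variable {𝒞 : Type*} [Category 𝒞] {𝒟 : Type*} [Category 𝒟] {F : 𝒞 ⥤ 𝒟}

namespace Functor

namespace SeparabilityStructure

lemma retr_map_comp (S : F.SeparabilityStructure) {X X' Y : 𝒞} (u : X' ⟶ X)
    (h : F.obj X ⟶ F.obj Y) : S.retr (F.map u ≫ h) = u ≫ S.retr h := by
  simpa using S.naturality u (𝟙 Y) h

def ofRetraction (G : 𝒟 ⥤ 𝒞) (η : 𝟭 𝒞 ⟶ F ⋙ G) (ν : F ⋙ G ⟶ 𝟭 𝒞) (hην : η ≫ ν = 𝟙 _) :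
    F.SeparabilityStructure where
  retr h := η.app _ ≫ G.map h ≫ ν.app _
  naturality u v h := by
    have hη := η.naturality u
    have hν := ν.naturality v
    dsimp at hη hν
    simp only [G.map_comp, Category.assoc, hν]
    rw [reassoc_of% hη]
  retr_map f := by
    have hη := η.naturality f
    have hid := NatTrans.congr_app hην
    dsimp at hη hid
    rw [← Category.assoc, ← hη, Category.assoc, hid, Category.comp_id]

end SeparabilityStructure

theorem Separable.isSplitMono_of_isSplitMono_map (hF : F.Separable) {X Y : 𝒞} (f : X ⟶ Y)
    [IsSplitMono (F.map f)] : IsSplitMono f :=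
  let ⟨S⟩ := hF
  IsSplitMono.mk' ⟨S.retr (retraction (F.map f)), by
    rw [← S.retr_map_comp, IsSplitMono.id, ← F.map_id, S.retr_map]⟩

theorem separable_of_isSplitMono (G : 𝒟 ⥤ 𝒞) (η : 𝟭 𝒞 ⟶ F ⋙ G) [IsSplitMono η] :
    F.Separable :=
  ⟨.ofRetraction G η (retraction η) (IsSplitMono.id η)⟩

end Functor

theorem Adjunction.isSplitMono_unit_app_of_separable {G : 𝒟 ⥤ 𝒞} (adj : F ⊣ G)
    (hF : F.Separable) (X : 𝒞) : IsSplitMono (adj.unit.app X) :=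
  have : IsSplitMono (F.map (adj.unit.app X)) :=
    .mk' ⟨adj.counit.app (F.obj X), adj.left_triangle_components X⟩
  hF.isSplitMono_of_isSplitMono_map _

end CategoryTheory

section FreeModule

variable (A : Mon C)

def freeModUnit : 𝟭 C ⟶ freeMod A ⋙ Mod.forget A.X :=
  (leftUnitorNatIso C).inv ≫ (tensoringLeft C).map A.mon.one

def freeModCounit : Mod.forget A.X ⋙ freeMod A ⟶ 𝟭 (Mod C A.X) where
  app M := Mod.Hom.mk' (ModObj.smul (M := A.X) (X := M.X)) (by
    change ((α_ A.X A.X M.X).inv ≫ (A.mon.mul ▷ M.X)) ≫ _ = _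
    rw [Category.assoc]; exact M.assoc_flip.symm)
  naturality M N f := by
    ext
    exact (IsModHom.smul_hom (A := A.X) (f := f.hom)).symm

lemma freeMod_map_unit_comp_counit (X : C) :
    (freeMod A).map ((freeModUnit A).app X) ≫ (freeModCounit A).app ((freeMod A).obj X) =
      𝟙 _ := by
  ext
  change A.X ◁ ((λ_ X).inv ≫ A.mon.one ▷ X) ≫ (α_ A.X A.X X).inv ≫ A.mon.mul ▷ X = 𝟙 (A.X ⊗ X)
  rw [MonoidalCategory.whiskerLeft_comp_assoc, associator_inv_naturality_middle_assoc,
    ← comp_whiskerRight, MonObj.mul_one]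
  monoidal

lemma freeModUnit_app_comp_counit (M : Mod C A.X) :
    (freeModUnit A).app M.X ≫ ((freeModCounit A).app M).hom = 𝟙 M.X := by
  change ((λ_ M.X).inv ≫ A.mon.one ▷ M.X) ≫ ModObj.smul (M := A.X) (X := M.X) = 𝟙 M.X
  rw [Category.assoc, ModObj.one_smul_self, Iso.inv_hom_id]

def freeModAdjunction : freeMod A ⊣ Mod.forget A.X where
  unit := freeModUnit A
  counit := freeModCounit A
  left_triangle_components := freeMod_map_unit_comp_counit A
  right_triangle_components := freeModUnit_app_comp_counit A

lemma freeModUnit_app_tensorUnit : (freeModUnit A).app (𝟙_ C) = A.mon.one ≫ (ρ_ A.X).inv := by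
  change (λ_ (𝟙_ C)).inv ≫ A.mon.one ▷ 𝟙_ C = _
  rw [rightUnitor_inv_naturality, unitors_inv_equal]

instance [IsSplitMono A.mon.one] : IsSplitMono (freeModUnit A) :=
  inferInstanceAs (IsSplitMono ((leftUnitorNatIso C).inv ≫ (tensoringLeft C).map A.mon.one))

lemma isSplitMono_one_of_isSplitMono_freeModUnit_app [IsSplitMono ((freeModUnit A).app (𝟙_ C))] :
    IsSplitMono A.mon.one := by
  have h := IsSplitMono.id ((freeModUnit A).app (𝟙_ C))
  -- the instance argument of `retraction` mentions the unit too, so only the first occurrence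
  nth_rw 1 [freeModUnit_app_tensorUnit] at h
  exact .mk' ⟨_, (Category.assoc _ _ _).symm.trans h⟩

end FreeModule

/-- The free module functor is separable iff the unit of the algebra is a split mono. -/
theorem freeMod_separable_iff_isSplitMono_one (A : Mon C) :
    (freeMod A).Separable ↔ IsSplitMono A.mon.one := by
  constructor
  · intro hF
    have : IsSplitMono ((freeModUnit A).app (𝟙_ C)) :=
      (freeModAdjunction A).isSplitMono_unit_app_of_separable hF (𝟙_ C)
    exact isSplitMono_one_of_isSplitMono_freeModUnit_app A
  · intro
    exact Functor.separable_of_isSplitMono (Mod.forget A.X) (freeModUnit A)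
end

section
/- Let C be a monoidal category with unit object 1 decomposing as a finite biproduct 1 = ⨁_{i∈I} 1_i where 1_i ⊗ 1_j = 0 for i ≠ j. Then each 1_i carries the structure of an algebra in C, with multiplication the canonical isomorphism 1_i ⊗ 1_i ≅ 1_i and unit the projection p_i : 1 → 1_i, and also the structure of a coalgebra with counit the inclusion i_i : 1_i → 1. -/
/-!
If `one : 𝟙 ⟶ A` and `eps : A ⟶ 𝟙` exhibit `A` as a retract of the unit and the idempotent
`one ≫ eps` acts as the identity on `A` from the left, then `A ◁ eps` is an isomorphism, and
`(A ◁ eps) ≫ ρ_A : A ⊗ A ≅ A` is a monoid multiplication with unit `one`; its inverse is a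
comultiplication with counit `eps`, coassociativity being the inverse of associativity.
A unit summand `1ᵢ` is such a retract, with `one = pᵢ` and `eps = ιᵢ`: whiskering the
decomposition `𝟙 = ∑ⱼ ιⱼ pⱼ` with `1ᵢ` kills every term but `ιᵢ pᵢ`, since `1ᵢ ⊗ 1ⱼ = 0`.
-/

open CategoryTheory CategoryTheory.Limits MonoidalCategory

universe v u

section RetractOfUnit

variable {C : Type*} [Category C] [MonoidalCategory C] {A : C} {one : 𝟙_ C ⟶ A}
  {eps : A ⟶ 𝟙_ C}

theorem coassoc_inv_of_assoc {m : A ⊗ A ⟶ A} [IsIso m]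
    (hm : (m ▷ A) ≫ m = (α_ A A A).hom ≫ (A ◁ m) ≫ m) :
    inv m ≫ (A ◁ inv m) = inv m ≫ (inv m ▷ A) ≫ (α_ A A A).hom := by
  have hinv := IsIso.inv_eq_inv.mpr hm
  simp only [IsIso.inv_comp, inv_whiskerRight, inv_whiskerLeft, Category.assoc] at hinv
  rw [← Category.assoc, hinv, Category.assoc, Category.assoc, IsIso.inv_hom_id, Category.comp_id]

def whiskerLeftRetractIso (hsec : eps ≫ one = 𝟙 A) (hidem : A ◁ (one ≫ eps) = 𝟙 _) :
    A ⊗ 𝟙_ C ≅ A ⊗ A where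
  hom := A ◁ one
  inv := A ◁ eps
  hom_inv_id := by rwa [← whiskerLeft_comp]
  inv_hom_id := by rw [← whiskerLeft_comp, hsec, whiskerLeft_id]

def retractMul (eps : A ⟶ 𝟙_ C) : A ⊗ A ⟶ A := (A ◁ eps) ≫ (ρ_ A).hom

theorem whiskerLeft_one_retractMul (hidem : A ◁ (one ≫ eps) = 𝟙 _) :
    (A ◁ one) ≫ retractMul eps = (ρ_ A).hom := by
  rw [retractMul, ← Category.assoc, ← whiskerLeft_comp, hidem, Category.id_comp]

theorem one_whiskerRight_retractMul (hsec : eps ≫ one = 𝟙 A) :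
    (one ▷ A) ≫ retractMul eps = (λ_ A).hom := by
  calc (one ▷ A) ≫ (A ◁ eps) ≫ (ρ_ A).hom
      = (𝟙_ C ◁ eps) ≫ (one ▷ 𝟙_ C) ≫ (ρ_ A).hom := by rw [whisker_exchange_assoc]
    _ = (𝟙_ C ◁ eps) ≫ (λ_ (𝟙_ C)).hom ≫ one := by
        rw [rightUnitor_naturality, unitors_equal]
    _ = (λ_ A).hom := by rw [leftUnitor_naturality_assoc, hsec, Category.comp_id]

theorem retractMul_assoc (hsec : eps ≫ one = 𝟙 A) (hidem : A ◁ (one ≫ eps) = 𝟙 _) :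
    (retractMul eps ▷ A) ≫ retractMul eps
      = (α_ A A A).hom ≫ (A ◁ retractMul eps) ≫ retractMul eps := by
  have : IsIso (A ◁ one) := (whiskerLeftRetractIso hsec hidem).isIso_hom
  rw [← cancel_epi ((A ◁ one) ▷ A)]
  calc ((A ◁ one) ▷ A) ≫ (retractMul eps ▷ A) ≫ retractMul eps
      = ((ρ_ A).hom ▷ A) ≫ retractMul eps := by
        rw [← comp_whiskerRight_assoc, whiskerLeft_one_retractMul hidem]
    _ = (α_ A (𝟙_ C) A).hom ≫ (A ◁ (λ_ A).hom) ≫ retractMul eps := by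
        rw [triangle_assoc]
    _ = ((A ◁ one) ▷ A) ≫ (α_ A A A).hom ≫ (A ◁ retractMul eps) ≫ retractMul eps := by
        rw [associator_naturality_middle_assoc, ← whiskerLeft_comp_assoc,
          one_whiskerRight_retractMul hsec]

theorem isIso_retractMul (hsec : eps ≫ one = 𝟙 A) (hidem : A ◁ (one ≫ eps) = 𝟙 _) :
    IsIso (retractMul eps) := by
  have : IsIso (A ◁ eps) := (whiskerLeftRetractIso hsec hidem).isIso_inv
  unfold retractMul
  infer_instance

theorem inv_retractMul_whiskerLeft [IsIso (retractMul eps)] :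
    inv (retractMul eps) ≫ (A ◁ eps) = (ρ_ A).inv := by
  rw [IsIso.inv_comp_eq, retractMul, Category.assoc, Iso.hom_inv_id, Category.comp_id]

theorem inv_retractMul_whiskerRight [IsIso (retractMul eps)] (hsec : eps ≫ one = 𝟙 A) :
    inv (retractMul eps) ≫ (eps ▷ A) = (λ_ A).inv := by
  have hsecRight : (eps ▷ A) ≫ (one ▷ A) = 𝟙 _ := by
    rw [← comp_whiskerRight, hsec, id_whiskerRight]
  have : eps ▷ A = retractMul eps ≫ (λ_ A).inv := by
    calc eps ▷ A = (eps ▷ A) ≫ ((one ▷ A) ≫ retractMul eps) ≫ (λ_ A).inv := by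
          rw [one_whiskerRight_retractMul hsec, Iso.hom_inv_id, Category.comp_id]
      _ = retractMul eps ≫ (λ_ A).inv := by
          rw [Category.assoc, reassoc_of% hsecRight]
  rw [this, IsIso.inv_hom_id_assoc]

end RetractOfUnit

theorem whiskerLeft_biproduct_π_comp_ι {C : Type*} [Category C] [Preadditive C]
    [MonoidalCategory C] [MonoidalPreadditive C] {J : Type} [Fintype J] {U : J → C}
    [HasBiproduct U] (X : C) (i : J) (hz : ∀ j, j ≠ i → IsZero (X ⊗ U j)) :
    X ◁ (biproduct.π U i ≫ biproduct.ι U i) = 𝟙 _ := by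
  rw [← whiskerLeft_id, ← biproduct.total, whiskerLeft_sum,
    Finset.sum_eq_single_of_mem i (Finset.mem_univ i)]
  intro j _ hj
  rw [whiskerLeft_comp, (hz j hj).eq_zero_of_tgt (X ◁ biproduct.π U j), zero_comp]

theorem unit_summands_are_algebras_and_coalgebras
    (C : Type u) [Category.{v} C] [Preadditive C] [HasFiniteBiproducts C]
    [MonoidalCategory C] [MonoidalPreadditive C]
    (ι : Type) [Fintype ι] (U : ι → C) (e : 𝟙_ C ≅ ⨁ U)
    (hz : ∀ i j : ι, i ≠ j → IsZero (U i ⊗ U j)) (i : ι) :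
    ∃ (mul : U i ⊗ U i ⟶ U i) (one : 𝟙_ C ⟶ U i)
      (comul : U i ⟶ U i ⊗ U i) (counit : U i ⟶ 𝟙_ C),
      -- the unit is the canonical projection, the counit the canonical inclusion
      one = e.hom ≫ biproduct.π U i ∧
      counit = biproduct.ι U i ≫ e.inv ∧
      -- the multiplication is the canonical isomorphism `1ᵢ ⊗ 1ᵢ ≅ 1ᵢ`,
      -- and the comultiplication is its inverse
      IsIso mul ∧
      comul ≫ mul = 𝟙 (U i) ∧ mul ≫ comul = 𝟙 (U i ⊗ U i) ∧
      -- algebra (monoid object) axioms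
      (one ▷ U i) ≫ mul = (λ_ (U i)).hom ∧
      (U i ◁ one) ≫ mul = (ρ_ (U i)).hom ∧
      (mul ▷ U i) ≫ mul = (α_ (U i) (U i) (U i)).hom ≫ (U i ◁ mul) ≫ mul ∧
      -- coalgebra (comonoid object) axioms
      comul ≫ (counit ▷ U i) = (λ_ (U i)).inv ∧
      comul ≫ (U i ◁ counit) = (ρ_ (U i)).inv ∧
      comul ≫ (U i ◁ comul) = comul ≫ (comul ▷ U i) ≫ (α_ (U i) (U i) (U i)).hom := by
  set one := e.hom ≫ biproduct.π U i
  set eps := biproduct.ι U i ≫ e.inv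
  have hsec : eps ≫ one = 𝟙 (U i) := by simp [one, eps]
  have hidem : U i ◁ (one ≫ eps) = 𝟙 _ := by
    have hπι := whiskerLeft_biproduct_π_comp_ι (U i) i fun j hj => hz i j (Ne.symm hj)
    simp only [one, eps, Category.assoc, whiskerLeft_comp] at hπι ⊢
    rw [reassoc_of% hπι, ← whiskerLeft_comp, Iso.hom_inv_id, whiskerLeft_id]
  have := isIso_retractMul hsec hidem
  exact ⟨retractMul eps, one, inv (retractMul eps), eps, rfl, rfl, this,
    IsIso.inv_hom_id _, IsIso.hom_inv_id _, one_whiskerRight_retractMul hsec,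
    whiskerLeft_one_retractMul hidem, retractMul_assoc hsec hidem, inv_retractMul_whiskerRight hsec,
    inv_retractMul_whiskerLeft, coassoc_inv_of_assoc (retractMul_assoc hsec hidem)⟩
end
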